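/- Let R be a G-graded ring and P a graded weakly prime ideal of R. If x, y, z are homogeneous elements of R with 0 ≠ xRyRz ⊆ P, then x ∈ P or y ∈ P or z ∈ P. -/
import Mathlib


variable {G R : Type*} [AddGroup G] [DecidableEq G] [Ring R]

/-- `x` is a homogeneous element of the `G`-graded ring `R`. -/
def IsHomog (𝒜 : G → AddSubgroup R) (x : R) : Prop := ∃ g, x ∈ 𝒜 g

/-- A two-sided ideal is graded if it contains all homogeneous components of its elements. -/
def IsGradedIdeal (𝒜 : G → AddSubgroup R) [GradedRing 𝒜] (P : TwoSidedIdeal R) : Prop :=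
  ∀ a ∈ P, ∀ g : G, (DirectSum.decompose 𝒜 a g : R) ∈ P

/-- Graded weakly prime: a proper graded ideal `P` such that `0 ≠ IJ ⊆ P` for graded
ideals `I, J` implies `I ⊆ P` or `J ⊆ P`. -/
def IsGradedWeaklyPrime (𝒜 : G → AddSubgroup R) [GradedRing 𝒜] (P : TwoSidedIdeal R) : Prop :=
  P ≠ ⊤ ∧ IsGradedIdeal 𝒜 P ∧
    ∀ I J : TwoSidedIdeal R, IsGradedIdeal 𝒜 I → IsGradedIdeal 𝒜 J →
      (∃ a ∈ I, ∃ b ∈ J, a * b ≠ 0) → (∀ a ∈ I, ∀ b ∈ J, a * b ∈ P) →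
      I ≤ P ∨ J ≤ P

/-- Taking the `g`-th homogeneous component, as an additive monoid hom `R →+ R`. -/
def homogComponent (𝒜 : G → AddSubgroup R) [GradedRing 𝒜] (g : G) : R →+ R where
  toFun a := (DirectSum.decompose 𝒜 a g : R)
  map_zero' := by simp
  map_add' := by intros; simp

lemma homogComponent_apply (𝒜 : G → AddSubgroup R) [GradedRing 𝒜] (g : G) (a : R) :
    homogComponent 𝒜 g a = (DirectSum.decompose 𝒜 a g : R) := rfl

open DirectSum in
/-- The two-sided ideal generated by a set of homogeneous elements is graded. -/
lemma isGradedIdeal_span (𝒜 : G → AddSubgroup R) [GradedRing 𝒜] (S : Set R)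
    (hS : ∀ s ∈ S, IsHomog 𝒜 s) : IsGradedIdeal 𝒜 (TwoSidedIdeal.span S) := by
  classical
  set J := TwoSidedIdeal.span S with hJ
  have key : ∀ (w a : R) (h : G), w ∈ 𝒜 h → (∀ g, (decompose 𝒜 a g : R) ∈ J) →
      ∀ g, (decompose 𝒜 (w * a) g : R) ∈ J := by
    intro w a h hw ha g
    rw [show g = h + (-h + g) from (add_neg_cancel_left h g).symm,
      DirectSum.coe_decompose_mul_add_of_left_mem 𝒜 hw]
    exact TwoSidedIdeal.mul_mem_left _ _ _ (ha _)
  have key' : ∀ (w a : R) (h : G), w ∈ 𝒜 h → (∀ g, (decompose 𝒜 a g : R) ∈ J) →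
      ∀ g, (decompose 𝒜 (a * w) g : R) ∈ J := by
    intro w a h hw ha g
    rw [show g = (g + -h) + h from (neg_add_cancel_right g h).symm,
      DirectSum.coe_decompose_mul_add_of_right_mem 𝒜 hw]
    exact TwoSidedIdeal.mul_mem_right _ _ _ (ha _)
  set T : TwoSidedIdeal R := TwoSidedIdeal.mk'
    {a | ∀ g, (decompose 𝒜 a g : R) ∈ J}
    (fun g => by simp [TwoSidedIdeal.zero_mem])
    (fun {a b} ha hb g => by
      simpa using TwoSidedIdeal.add_mem _ (ha g) (hb g))
    (fun {a} ha g => by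
      rw [← homogComponent_apply, map_neg, homogComponent_apply]
      exact TwoSidedIdeal.neg_mem _ (ha g))
    (fun {r a} ha g => by
      have hsum : r * a = ∑ h ∈ (decompose 𝒜 r).support, (decompose 𝒜 r h : R) * a := by
        rw [← Finset.sum_mul, DirectSum.sum_support_decompose]
      rw [hsum, ← homogComponent_apply, map_sum]
      exact sum_mem fun h _ => key _ a h (SetLike.coe_mem _) ha g)
    (fun {a r} ha g => by
      have hsum : a * r = ∑ h ∈ (decompose 𝒜 r).support, a * (decompose 𝒜 r h : R) := by
        rw [← Finset.mul_sum, DirectSum.sum_support_decompose]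
      rw [hsum, ← homogComponent_apply, map_sum]
      exact sum_mem fun h _ => key' _ a h (SetLike.coe_mem _) ha g) with hT
  have hST : S ⊆ T := by
    intro s hs
    rw [SetLike.mem_coe, hT, TwoSidedIdeal.mem_mk']
    intro g
    obtain ⟨h, hh⟩ := hS s hs
    by_cases hgh : g = h
    · subst hgh
      rw [decompose_of_mem_same 𝒜 hh]
      exact TwoSidedIdeal.subset_span hs
    · rw [decompose_of_mem_ne 𝒜 hh (Ne.symm hgh)]
      exact TwoSidedIdeal.zero_mem _
  intro a ha g
  have : a ∈ T := TwoSidedIdeal.mem_span_iff.mp ha T hST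
  rw [hT, TwoSidedIdeal.mem_mk'] at this
  exact this g

open DirectSum in
/-- Weakly prime applied to two homogeneous elements: `0 ≠ uRv ⊆ P` forces `u ∈ P` or `v ∈ P`. -/
lemma step2 (𝒜 : G → AddSubgroup R) [GradedRing 𝒜] (P : TwoSidedIdeal R)
    (hP : IsGradedWeaklyPrime 𝒜 P) (u v : R) (hu : IsHomog 𝒜 u) (hv : IsHomog 𝒜 v)
    (hne : ∃ s : R, u * s * v ≠ 0) (hsub : ∀ s : R, u * s * v ∈ P) :
    u ∈ P ∨ v ∈ P := by
  classical
  obtain ⟨_, _, hprime⟩ := hP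
  set I : TwoSidedIdeal R := TwoSidedIdeal.span {u} with hI
  set J : TwoSidedIdeal R := TwoSidedIdeal.span {v} with hJdef
  have hIgr : IsGradedIdeal 𝒜 I := isGradedIdeal_span 𝒜 _ (by
    rintro s hs; rw [Set.mem_singleton_iff] at hs; subst hs; exact hu)
  have hJgr : IsGradedIdeal 𝒜 J := isGradedIdeal_span 𝒜 _ (by
    rintro s hs; rw [Set.mem_singleton_iff] at hs; subst hs; exact hv)
  -- all elements b of J satisfy ∀ r, u * r * b ∈ P
  set T2 : TwoSidedIdeal R := TwoSidedIdeal.mk' {b | ∀ r : R, u * r * b ∈ P}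
    (fun r => by rw [mul_zero]; exact P.zero_mem)
    (fun {b c} hb hc r => by rw [mul_add]; exact P.add_mem (hb r) (hc r))
    (fun {b} hb r => by rw [mul_neg]; exact P.neg_mem (hb r))
    (fun {r' b} hb r => by
      have := hb (r * r'); simp only [mul_assoc] at this ⊢; exact this)
    (fun {b r'} hb r => by
      have := P.mul_mem_right (u * r * b) r' (hb r)
      simp only [mul_assoc] at this ⊢; exact this) with hT2
  have hJT2 : ∀ b ∈ J, ∀ r : R, u * r * b ∈ P := by
    intro b hb
    have : b ∈ T2 := TwoSidedIdeal.mem_span_iff.mp hb T2 (by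
      intro w hw
      rw [Set.mem_singleton_iff] at hw; subst hw
      rw [SetLike.mem_coe, hT2, TwoSidedIdeal.mem_mk']
      exact fun r => hsub r)
    rw [hT2, TwoSidedIdeal.mem_mk'] at this
    exact this
  -- all elements a of I satisfy ∀ b ∈ J, a * b ∈ P
  set T3 : TwoSidedIdeal R := TwoSidedIdeal.mk' {a | ∀ b ∈ J, a * b ∈ P}
    (fun b _ => by rw [zero_mul]; exact P.zero_mem)
    (fun {a c} ha hc b hb => by rw [add_mul]; exact P.add_mem (ha b hb) (hc b hb))
    (fun {a} ha b hb => by rw [neg_mul]; exact P.neg_mem (ha b hb))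
    (fun {r a} ha b hb => by
      have := P.mul_mem_left r (a * b) (ha b hb)
      simp only [mul_assoc] at this ⊢; exact this)
    (fun {a r} ha b hb => by
      have := ha (r * b) (J.mul_mem_left r b hb)
      simp only [mul_assoc] at this ⊢; exact this) with hT3
  have hprod : ∀ a ∈ I, ∀ b ∈ J, a * b ∈ P := by
    intro a ha
    have : a ∈ T3 := TwoSidedIdeal.mem_span_iff.mp ha T3 (by
      intro w hw
      rw [Set.mem_singleton_iff] at hw; subst hw
      rw [SetLike.mem_coe, hT3, TwoSidedIdeal.mem_mk']
      intro b hb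
      have := hJT2 b hb 1
      rwa [mul_one] at this)
    rw [hT3, TwoSidedIdeal.mem_mk'] at this
    exact this
  obtain ⟨s, hs⟩ := hne
  have hne' : ∃ a ∈ I, ∃ b ∈ J, a * b ≠ 0 := by
    refine ⟨u, TwoSidedIdeal.subset_span rfl, s * v,
      J.mul_mem_left s v (TwoSidedIdeal.subset_span rfl), ?_⟩
    intro h0
    exact hs (by rw [mul_assoc]; exact h0)
  rcases hprime I J hIgr hJgr hne' hprod with h | h
  · exact Or.inl (h (TwoSidedIdeal.subset_span rfl))
  · exact Or.inr (h (TwoSidedIdeal.subset_span rfl))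

/-- If `P` is graded weakly prime and `x, y, z` are homogeneous with `0 ≠ xRyRz ⊆ P`,
then `x ∈ P` or `y ∈ P` or `z ∈ P`. -/
theorem stmt1 (𝒜 : G → AddSubgroup R) [GradedRing 𝒜] (P : TwoSidedIdeal R)
    (hP : IsGradedWeaklyPrime 𝒜 P) (x y z : R)
    (hx : IsHomog 𝒜 x) (hy : IsHomog 𝒜 y) (hz : IsHomog 𝒜 z)
    (hne : ∃ r s : R, x * r * y * s * z ≠ 0)
    (hsub : ∀ r s : R, x * r * y * s * z ∈ P) :
    x ∈ P ∨ y ∈ P ∨ z ∈ P := by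
  classical
  obtain ⟨hPtop, hPgr, hprime⟩ := hP
  obtain ⟨gy, hgy⟩ := hy
  obtain ⟨gz, hgz⟩ := hz
  set S2 : Set R := {w | ∃ s : R, IsHomog 𝒜 s ∧ w = y * s * z} with hS2
  set I : TwoSidedIdeal R := TwoSidedIdeal.span {x} with hI
  set J : TwoSidedIdeal R := TwoSidedIdeal.span S2 with hJdef
  have hIgr : IsGradedIdeal 𝒜 I := isGradedIdeal_span 𝒜 _ (by
    rintro s hs; rw [Set.mem_singleton_iff] at hs; subst hs; exact hx)
  have hJgr : IsGradedIdeal 𝒜 J := isGradedIdeal_span 𝒜 _ (by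
    rintro w ⟨s, ⟨h, hsh⟩, rfl⟩
    exact ⟨gy + h + gz, SetLike.mul_mem_graded (SetLike.mul_mem_graded hgy hsh) hgz⟩)
  have hJmem : ∀ s : R, y * s * z ∈ J := by
    intro s
    have heq : y * s * z = ∑ h ∈ (DirectSum.decompose 𝒜 s).support, y * (DirectSum.decompose 𝒜 s h : R) * z := by
      conv_lhs => rw [← DirectSum.sum_support_decompose 𝒜 s, Finset.mul_sum, Finset.sum_mul]
    rw [heq]
    exact sum_mem fun h _ =>
      TwoSidedIdeal.subset_span ⟨(DirectSum.decompose 𝒜 s h : R), ⟨h, SetLike.coe_mem _⟩, rfl⟩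
  -- all elements b of J satisfy ∀ r, x * r * b ∈ P
  set T2 : TwoSidedIdeal R := TwoSidedIdeal.mk' {b | ∀ r : R, x * r * b ∈ P}
    (fun r => by rw [mul_zero]; exact P.zero_mem)
    (fun {b c} hb hc r => by rw [mul_add]; exact P.add_mem (hb r) (hc r))
    (fun {b} hb r => by rw [mul_neg]; exact P.neg_mem (hb r))
    (fun {r' b} hb r => by
      have := hb (r * r'); simp only [mul_assoc] at this ⊢; exact this)
    (fun {b r'} hb r => by
      have := P.mul_mem_right (x * r * b) r' (hb r)
      simp only [mul_assoc] at this ⊢; exact this) with hT2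
  have hJT2 : ∀ b ∈ J, ∀ r : R, x * r * b ∈ P := by
    intro b hb
    have : b ∈ T2 := TwoSidedIdeal.mem_span_iff.mp hb T2 (by
      rintro w ⟨s, _, rfl⟩
      rw [SetLike.mem_coe, hT2, TwoSidedIdeal.mem_mk']
      intro r
      have := hsub r s
      simpa only [mul_assoc] using this)
    rw [hT2, TwoSidedIdeal.mem_mk'] at this
    exact this
  set T3 : TwoSidedIdeal R := TwoSidedIdeal.mk' {a | ∀ b ∈ J, a * b ∈ P}
    (fun b _ => by rw [zero_mul]; exact P.zero_mem)
    (fun {a c} ha hc b hb => by rw [add_mul]; exact P.add_mem (ha b hb) (hc b hb))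
    (fun {a} ha b hb => by rw [neg_mul]; exact P.neg_mem (ha b hb))
    (fun {r a} ha b hb => by
      have := P.mul_mem_left r (a * b) (ha b hb)
      simp only [mul_assoc] at this ⊢; exact this)
    (fun {a r} ha b hb => by
      have := ha (r * b) (J.mul_mem_left r b hb)
      simp only [mul_assoc] at this ⊢; exact this) with hT3
  have hprod : ∀ a ∈ I, ∀ b ∈ J, a * b ∈ P := by
    intro a ha
    have : a ∈ T3 := TwoSidedIdeal.mem_span_iff.mp ha T3 (by
      intro w hw
      rw [Set.mem_singleton_iff] at hw; subst hw
      rw [SetLike.mem_coe, hT3, TwoSidedIdeal.mem_mk']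
      intro b hb
      have := hJT2 b hb 1
      rwa [mul_one] at this)
    rw [hT3, TwoSidedIdeal.mem_mk'] at this
    exact this
  obtain ⟨r, s, hrs⟩ := hne
  have hne' : ∃ a ∈ I, ∃ b ∈ J, a * b ≠ 0 := by
    refine ⟨x, TwoSidedIdeal.subset_span rfl, r * (y * s * z),
      J.mul_mem_left r _ (hJmem s), ?_⟩
    intro h0
    exact hrs (by simpa only [mul_assoc] using h0)
  rcases hprime I J hIgr hJgr hne' hprod with h | h
  · exact Or.inl (h (TwoSidedIdeal.subset_span rfl))
  · -- y * s * z ∈ P for all s; apply step2 to y and z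
    refine Or.inr (step2 𝒜 P ⟨hPtop, hPgr, hprime⟩ y z ⟨gy, hgy⟩ ⟨gz, hgz⟩ ⟨s, ?_⟩
      (fun s' => h (hJmem s')))
    intro h0
    exact hrs (by rw [show x * r * y * s * z = x * r * (y * s * z) by
      simp only [mul_assoc], h0, mul_zero])
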